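/- Let λ > 0, X ∈ ℝ^{n×p}, 2 ≤ r ≤ p, and weights w_{ℓm} > 0. Suppose β̂ with β̂_r > 0 is a minimizer of the r-th row subproblem with associated dual vectors (a^{(ℓ)})_{ℓ=1}^{r−1} satisfying the optimality (KKT) conditions, and suppose in addition that ‖(a^{(ℓ)})_{g_ℓ}‖₂ < 1 strictly for every ℓ = 1,…,J(β̂), where J(β̂) is the largest ℓ ∈ {0,1,…,r−1} such that β̂_1 = ⋯ = β̂_ℓ = 0 (J(β̂) = 0 if β̂_1 ≠ 0). Then every minimizer β̃ of the r-th row subproblem satisfies β̃_1 = ⋯ = β̃_{J(β̂)} = 0; equivalently, writing K(β) = r − 1 − J(β), every other solution β̃ satisfies K(β̃) ≤ K(β̂). -/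

import Mathlib

/-!
The smooth part `S(β) = -2 log β_r + ‖Xβ‖² / n` of the objective is convex, so
`S(β̃) ≥ S(β̂) + ⟨∇S(β̂), β̃ - β̂⟩`, and stationarity turns `∇S(β̂)` into
`-λ Σ_ℓ W^{(ℓ)} ∗ a^{(ℓ)}`. Since `‖a^{(ℓ)}‖ ≤ 1` and `⟨a^{(ℓ)}, W^{(ℓ)} ∗ β̂⟩ = ‖W^{(ℓ)} ∗ β̂‖`,
this gives `F(β̃) - F(β̂) ≥ λ Σ_ℓ (‖W^{(ℓ)} ∗ β̃‖ - ⟨a^{(ℓ)}, W^{(ℓ)} ∗ β̃⟩)`, a sum of terms that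
are nonnegative by Cauchy–Schwarz. If `β̃_m ≠ 0` for some `m` in the leading zero block of `β̂`,
the term `ℓ = m` is strictly positive because `‖a^{(m)}‖ < 1`, so `β̃` is not a minimizer.
-/

open Matrix Finset Real

theorem Real.log_le_log_add_sub_div {s t : ℝ} (hs : 0 < s) (ht : 0 < t) :
    log t ≤ log s + (t - s) / s := by
  have h := log_le_sub_one_of_pos (div_pos ht hs)
  rw [log_div ht.ne' hs.ne'] at h
  rw [sub_div, div_self hs.ne']
  linarith

theorem Matrix.sum_mulVec_sq_add_le {ι κ : Type*} [Fintype ι] [Fintype κ]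
    (A : Matrix ι κ ℝ) (s t : κ → ℝ) :
    ∑ i, (A *ᵥ s) i ^ 2 + 2 * ((Aᵀ * A) *ᵥ s ⬝ᵥ (t - s)) ≤ ∑ i, (A *ᵥ t) i ^ 2 := by
  have hsplit : A *ᵥ t = A *ᵥ s + A *ᵥ (t - s) := by rw [mulVec_sub]; abel
  have hgram : (Aᵀ * A) *ᵥ s ⬝ᵥ (t - s) = ∑ i, (A *ᵥ s) i * (A *ᵥ (t - s)) i := by
    rw [← mulVec_mulVec, mulVec_transpose, ← dotProduct_mulVec]; rfl
  have hsq : 0 ≤ ∑ i, (A *ᵥ (t - s)) i ^ 2 := sum_nonneg fun i _ => sq_nonneg _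
  have hexp : ∑ i, (A *ᵥ t) i ^ 2 = ∑ i, (A *ᵥ s) i ^ 2
      + 2 * ∑ i, (A *ᵥ s) i * (A *ᵥ (t - s)) i + ∑ i, (A *ᵥ (t - s)) i ^ 2 := by
    rw [mul_sum, ← sum_add_distrib, ← sum_add_distrib, hsplit]
    exact sum_congr rfl fun i _ => by simp only [Pi.add_apply]; ring
  linarith

theorem neg_two_mul_log_add_sum_sq_tangent_le {ι κ : Type*} [Fintype ι] [Fintype κ]
    (A : Matrix ι κ ℝ) (n : ℕ) (k : κ) {β γ : κ → ℝ} (hβ : 0 < β k) (hγ : 0 < γ k) :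
    -2 * log (β k) + 1 / n * ∑ i, (A *ᵥ β) i ^ 2
        + (-(2 / β k) * (γ - β) k + 2 / n * ((Aᵀ * A) *ᵥ β ⬝ᵥ (γ - β)))
      ≤ -2 * log (γ k) + 1 / n * ∑ i, (A *ᵥ γ) i ^ 2 := by
  have hlog := log_le_log_add_sub_div hβ hγ
  have hquad := mul_le_mul_of_nonneg_left (sum_mulVec_sq_add_le A β γ)
    (by positivity : (0 : ℝ) ≤ 1 / n)
  have hlin : -(2 / β k) * (γ - β) k = -2 * ((γ k - β k) / β k) := by
    rw [Pi.sub_apply]; ring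
  have hscale : 1 / n * (∑ i, (A *ᵥ β) i ^ 2 + 2 * ((Aᵀ * A) *ᵥ β ⬝ᵥ (γ - β)))
      = 1 / n * ∑ i, (A *ᵥ β) i ^ 2 + 2 / n * ((Aᵀ * A) *ᵥ β ⬝ᵥ (γ - β)) := by ring
  linarith

theorem Real.sum_mul_le_sqrt_sum_sq_of_le_one {ι : Type*} {s : Finset ι} {f g : ι → ℝ}
    (hf : √(∑ i ∈ s, f i ^ 2) ≤ 1) : ∑ i ∈ s, f i * g i ≤ √(∑ i ∈ s, g i ^ 2) :=
  (sum_mul_le_sqrt_mul_sqrt s f g).trans (mul_le_of_le_one_left (sqrt_nonneg _) hf)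

theorem Real.sum_mul_lt_sqrt_sum_sq_of_lt_one {ι : Type*} {s : Finset ι} {f g : ι → ℝ}
    (hf : √(∑ i ∈ s, f i ^ 2) < 1) {i : ι} (hi : i ∈ s) (hgi : g i ≠ 0) :
    ∑ i ∈ s, f i * g i < √(∑ i ∈ s, g i ^ 2) := by
  have hg : 0 < √(∑ i ∈ s, g i ^ 2) :=
    sqrt_pos.mpr (sum_pos' (fun _ _ => sq_nonneg _) ⟨i, hi, by positivity⟩)
  exact (sum_mul_le_sqrt_mul_sqrt s f g).trans_lt (mul_lt_of_lt_one_left hg hf)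

theorem Real.sqrt_sum_sq_le_one_of_eq_div_sqrt {ι : Type*} {s : Finset ι} {f g : ι → ℝ}
    (hfg : ∀ i ∈ s, f i = g i / √(∑ j ∈ s, g j ^ 2)) : √(∑ i ∈ s, f i ^ 2) ≤ 1 := by
  rw [sum_congr rfl fun i hi => by rw [hfg i hi, div_pow], ← sum_div,
    sq_sqrt (sum_nonneg fun _ _ => sq_nonneg _)]
  exact sqrt_le_one.mpr (div_self_le_one _)

theorem Real.sum_mul_eq_sqrt_of_eq_div_sqrt {ι : Type*} {s : Finset ι} {f g : ι → ℝ}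
    (hfg : ∀ i ∈ s, f i = g i / √(∑ j ∈ s, g j ^ 2)) :
    ∑ i ∈ s, f i * g i = √(∑ i ∈ s, g i ^ 2) := by
  rw [sum_congr rfl fun i hi => by rw [hfg i hi, div_mul_eq_mul_div, ← sq], ← sum_div,
    div_sqrt]

theorem Real.sqrt_sum_sq_le_one_and_sum_mul_eq_sqrt {ι : Type*} {s : Finset ι}
    {a w β : ι → ℝ}
    (hgrad : (¬ ∀ i ∈ s, β i = 0) → ∀ i ∈ s, a i = w i * β i / √(∑ j ∈ s, (w j * β j) ^ 2))
    (hfeas : (∀ i ∈ s, β i = 0) → √(∑ i ∈ s, a i ^ 2) ≤ 1) :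
    √(∑ i ∈ s, a i ^ 2) ≤ 1 ∧ ∑ i ∈ s, a i * (w i * β i) = √(∑ i ∈ s, (w i * β i) ^ 2) := by
  by_cases hzero : ∀ i ∈ s, β i = 0
  · refine ⟨hfeas hzero, ?_⟩
    rw [sum_eq_zero, sum_eq_zero, sqrt_zero] <;> intro i hi <;> simp [hzero i hi]
  · exact ⟨sqrt_sum_sq_le_one_of_eq_div_sqrt (hgrad hzero),
      sum_mul_eq_sqrt_of_eq_div_sqrt (hgrad hzero)⟩

theorem sum_sum_ite_le_mul_eq {r N : ℕ} (w : ℕ → ℕ → ℝ) (a : ℕ → Fin r → ℝ)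
    (d : Fin r → ℝ) :
    ∑ j : Fin r, (∑ ℓ ∈ range N, (if (j : ℕ) ≤ ℓ then w ℓ j else 0) * a ℓ j) * d j
      = ∑ ℓ ∈ range N, ∑ m ∈ univ.filter (fun m : Fin r => (m : ℕ) ≤ ℓ),
          a ℓ m * (w ℓ m * d m) := by
  simp only [sum_mul, sum_filter]
  rw [sum_comm]
  refine sum_congr rfl fun ℓ _ => sum_congr rfl fun j _ => ?_
  split_ifs <;> ring

theorem sum_stationarity_mul_eq_zero {r N : ℕ} {k : Fin r} {b c lam : ℝ}
    {G : Matrix (Fin r) (Fin r) ℝ} {β : Fin r → ℝ} {w : ℕ → ℕ → ℝ} {a : ℕ → Fin r → ℝ}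
    (hstat : ∀ j : Fin r, -b * (if j = k then 1 else 0) + c * (G *ᵥ β) j
      + lam * ∑ ℓ ∈ range N, (if (j : ℕ) ≤ ℓ then w ℓ j else 0) * a ℓ j = 0)
    (d : Fin r → ℝ) :
    -b * d k + c * (G *ᵥ β ⬝ᵥ d)
      + lam * ∑ ℓ ∈ range N, ∑ m ∈ univ.filter (fun m : Fin r => (m : ℕ) ≤ ℓ),
          a ℓ m * (w ℓ m * d m) = 0 := by
  have hsum : ∑ j, (-b * (if j = k then 1 else 0) + c * (G *ᵥ β) j
      + lam * ∑ ℓ ∈ range N, (if (j : ℕ) ≤ ℓ then w ℓ j else 0) * a ℓ j) * d j = 0 :=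
    sum_eq_zero fun j _ => by rw [hstat j, zero_mul]
  rw [← sum_sum_ite_le_mul_eq]
  refine Eq.trans ?_ hsum
  simp only [add_mul, sum_add_distrib, mul_assoc, ← mul_sum, ite_mul, one_mul, zero_mul,
    sum_ite_eq', mem_univ, if_true, dotProduct]

/-- Lemma `theory:moresparse`: if `β̂` minimizes the `r`-th row subproblem
with dual vectors `a^{(ℓ)}` satisfying the KKT conditions, and strict dual feasibility
`‖(a^{(ℓ)})_{g_ℓ}‖₂ < 1` holds for every group `ℓ` contained in the leading zero block of
`β̂` (whose 0-based length is `J`, the largest number of leading zero coordinates of `β̂`),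
then every minimizer `β̃` of the subproblem also has its first `J` coordinates equal to
zero, i.e. `K(β̃) ≤ K(β̂)`. -/
theorem stmt_8 (n r : ℕ) (hr2 : 2 ≤ r)
    (lam : ℝ) (hlam : 0 < lam)
    (w : ℕ → ℕ → ℝ) (hw : ∀ ℓ m : ℕ, m ≤ ℓ → ℓ < r - 1 → 0 < w ℓ m)
    (Xr : Matrix (Fin n) (Fin r) ℝ)
    (F : (Fin r → ℝ) → ℝ)
    (hF : ∀ β : Fin r → ℝ,
      F β = -2 * Real.log (β ⟨r - 1, by omega⟩)
        + (1 / (n : ℝ)) * ∑ i : Fin n, (Xr.mulVec β i) ^ 2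
        + lam * ∑ ℓ ∈ Finset.range (r - 1),
            Real.sqrt (∑ m ∈ Finset.univ.filter (fun m : Fin r => (m : ℕ) ≤ ℓ),
              w ℓ (m : ℕ) ^ 2 * β m ^ 2))
    (βh : Fin r → ℝ) (hβpos : 0 < βh ⟨r - 1, by omega⟩)
    (a : ℕ → Fin r → ℝ)
    -- KKT conditions for (β̂, a):
    (hstat : ∀ j : Fin r,
      -(2 / βh ⟨r - 1, by omega⟩) * (if j = (⟨r - 1, by omega⟩ : Fin r) then 1 else 0)
        + (2 / (n : ℝ)) * ((Xrᵀ * Xr).mulVec βh j)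
        + lam * ∑ ℓ ∈ Finset.range (r - 1),
            (if (j : ℕ) ≤ ℓ then w ℓ (j : ℕ) else 0) * a ℓ j = 0)
    (hagrad : ∀ ℓ, ℓ < r - 1 → (¬ ∀ m : Fin r, (m : ℕ) ≤ ℓ → βh m = 0) →
      ∀ m : Fin r, (m : ℕ) ≤ ℓ →
        a ℓ m = w ℓ (m : ℕ) * βh m /
          Real.sqrt (∑ m' ∈ Finset.univ.filter (fun m' : Fin r => (m' : ℕ) ≤ ℓ),
            (w ℓ (m' : ℕ) * βh m') ^ 2))
    (hafeas : ∀ ℓ, ℓ < r - 1 → (∀ m : Fin r, (m : ℕ) ≤ ℓ → βh m = 0) →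
      Real.sqrt (∑ m ∈ Finset.univ.filter (fun m : Fin r => (m : ℕ) ≤ ℓ), a ℓ m ^ 2) ≤ 1)
    -- J = J(β̂), the length of the leading zero block of β̂:
    (J : ℕ) (hJle : J ≤ r - 1)
    -- strict dual feasibility on the zero groups:
    (hstrict : ∀ ℓ, ℓ < J →
      Real.sqrt (∑ m ∈ Finset.univ.filter (fun m : Fin r => (m : ℕ) ≤ ℓ), a ℓ m ^ 2) < 1) :
    ∀ βt : Fin r → ℝ, 0 < βt ⟨r - 1, by omega⟩ →
      (∀ β : Fin r → ℝ, 0 < β ⟨r - 1, by omega⟩ → F βt ≤ F β) →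
      ∀ m : Fin r, (m : ℕ) < J → βt m = 0 := by
  intro βt hβt hminT m0 hm0J
  by_contra hm0ne
  have hdual : ∀ ℓ < r - 1,
      √(∑ m ∈ univ.filter (fun m : Fin r => (m : ℕ) ≤ ℓ), a ℓ m ^ 2) ≤ 1 ∧
      ∑ m ∈ univ.filter (fun m : Fin r => (m : ℕ) ≤ ℓ), a ℓ m * (w ℓ m * βh m)
        = √(∑ m ∈ univ.filter (fun m : Fin r => (m : ℕ) ≤ ℓ), (w ℓ m * βh m) ^ 2) :=
    fun ℓ hℓ => sqrt_sum_sq_le_one_and_sum_mul_eq_sqrt (by simpa using hagrad ℓ hℓ)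
      (by simpa using hafeas ℓ hℓ)
  have hgap : ∑ ℓ ∈ range (r - 1), ∑ m ∈ univ.filter (fun m : Fin r => (m : ℕ) ≤ ℓ),
        a ℓ m * (w ℓ m * βt m)
      < ∑ ℓ ∈ range (r - 1), √(∑ m ∈ univ.filter (fun m : Fin r => (m : ℕ) ≤ ℓ),
        (w ℓ m * βt m) ^ 2) := by
    have hm0r : (m0 : ℕ) < r - 1 := hm0J.trans_le hJle
    refine sum_lt_sum (fun ℓ hℓ => sum_mul_le_sqrt_sum_sq_of_le_one
      (hdual ℓ (mem_range.mp hℓ)).1) ⟨m0, mem_range.mpr hm0r, ?_⟩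
    exact sum_mul_lt_sqrt_sum_sq_of_lt_one (hstrict m0 hm0J) (i := m0) (by simp)
      (mul_ne_zero (hw m0 m0 le_rfl hm0r).ne' hm0ne)
  have hsmooth := neg_two_mul_log_add_sum_sq_tangent_le Xr n ⟨r - 1, by omega⟩ hβpos hβt
  have hpair := sum_stationarity_mul_eq_zero hstat (βt - βh)
  simp only [Pi.sub_apply, mul_sub, sum_sub_distrib] at hsmooth hpair
  rw [sum_congr rfl fun ℓ hℓ => (hdual ℓ (mem_range.mp hℓ)).2] at hpair
  have hle := hminT βh hβpos
  simp only [hF, ← mul_pow] at hle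
  linarith [mul_lt_mul_of_pos_left hgap hlam]
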